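/- Let ρ_1, …, ρ_N be density matrices on ℂ^d, let p ∈ ℝ^N be a probability vector, and let ρ̄ = Σ_{i=1}^N p_i ρ_i. Let k be a positive integer with k ≤ d and let η ≥ 0, and suppose the sum of the k largest eigenvalues of ρ̄ is at least 1 − η. Then, with c = 2 − √2, Σ_{i=1}^N p_i D_Tr(ρ_i, ρ̄) ≤ (√k / (c√2)) · ( Σ_{i=1}^N Σ_{j=1}^N p_i p_j D_HS(ρ_i, ρ_j)² )^{1/2} + η. -/

import Mathlib

open Matrix Finset
open scoped ComplexOrder

/-- The trace norm `‖A‖₁ = Tr √(Aᴴ A)` of a complex matrix. -/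
noncomputable def traceNorm {d : ℕ} (A : Matrix (Fin d) (Fin d) ℂ) : ℝ :=
  (((Matrix.posSemidef_conjTranspose_mul_self A).1.eigenvectorUnitary : Matrix (Fin d) (Fin d) ℂ) *
    diagonal (((↑) : ℝ → ℂ) ∘ Real.sqrt ∘ (Matrix.posSemidef_conjTranspose_mul_self A).1.eigenvalues) *
    (star (Matrix.posSemidef_conjTranspose_mul_self A).1.eigenvectorUnitary :
      Matrix (Fin d) (Fin d) ℂ)).trace.re

/-- The trace distance `D_Tr(ρ,σ) = ½‖ρ − σ‖₁`. -/
noncomputable def DTr {d : ℕ} (ρ σ : Matrix (Fin d) (Fin d) ℂ) : ℝ :=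
  traceNorm (ρ - σ) / 2

/-- The Hilbert–Schmidt distance `D_HS(ρ,σ) = ‖ρ − σ‖₂ = √(Tr[(ρ−σ)ᴴ(ρ−σ)])`. -/
noncomputable def DHS {d : ℕ} (ρ σ : Matrix (Fin d) (Fin d) ℂ) : ℝ :=
  Real.sqrt (((ρ - σ)ᴴ * (ρ - σ)).trace.re)

/-!
Let `A = ρᵢ - ρ̄`, let `C = sgn A` (so `‖A‖₁ = Re Tr (C A)` and `-1 ≤ C ≤ 1`), and let `P` be the
spectral projection of `ρ̄` onto the `k` eigenvectors of the hypothesis, `Q = 1 - P`. Splitting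
`C = P C + Q C P + Q C Q`, the first two pieces have Hilbert–Schmidt norm at most `√k`, so by
Cauchy–Schwarz they contribute at most `2 √k ‖A‖₂`, while `-Q ≤ Q C Q ≤ Q` bounds the last one
by `Tr (Q ρᵢ) + Tr (Q ρ̄)`. Averaging over `i`, the tail terms average to `Tr (Q ρ̄) ≤ η`, and
`‖ρᵢ - ρ̄‖₂ ≤ ∑ⱼ pⱼ ‖ρᵢ - ρⱼ‖₂` together with Cauchy–Schwarz for the weights `pᵢ pⱼ` gives the
mean-square term. The constant `√k` obtained this way is at most `√k / ((2 - √2) √2)`.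
-/

open scoped MatrixOrder

section
variable {n : Type*} [Fintype n] [DecidableEq n]

lemma Matrix.PosSemidef.re_trace_mul_nonneg {X Y : Matrix n n ℂ} (hX : X.PosSemidef)
    (hY : Y.PosSemidef) : 0 ≤ (X * Y).trace.re := by
  obtain ⟨B, rfl⟩ := CStarAlgebra.nonneg_iff_eq_star_mul_self.mp hX.nonneg
  rw [star_eq_conjTranspose, mul_assoc, trace_mul_comm]
  exact (RCLike.nonneg_iff.mp (hY.mul_mul_conjTranspose_same B).trace_nonneg).1

lemma re_trace_compress_sub_le {Q C ρ σ : Matrix n n ℂ} (hQ : IsStarProjection Q)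
    (hC : -1 ≤ C) (hC' : C ≤ 1) (hρ : ρ.PosSemidef) (hσ : σ.PosSemidef) :
    (Q * C * Q * (ρ - σ)).trace.re ≤ (Q * ρ).trace.re + (Q * σ).trace.re := by
  have hQQ : Q * Q = Q := hQ.isIdempotentElem.eq
  have hcompress : ∀ X : Matrix n n ℂ, 0 ≤ X → (Q * X * Q).PosSemidef := fun X hX =>
    nonneg_iff_posSemidef.mp <| by
      simpa [hQ.isSelfAdjoint.star_eq] using star_left_conjugate_nonneg hX Q
  have h₁ := (hcompress _ (sub_nonneg.mpr hC')).re_trace_mul_nonneg hρ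
  have h₂ := (hcompress _ (neg_le_iff_add_nonneg'.mp hC)).re_trace_mul_nonneg hσ
  have e₁ : Q * (1 - C) * Q * ρ = Q * ρ - Q * C * Q * ρ := by
    rw [mul_sub, mul_one, sub_mul, sub_mul, hQQ]
  have e₂ : Q * (1 + C) * Q * σ = Q * σ + Q * C * Q * σ := by
    rw [mul_add, mul_one, add_mul, add_mul, hQQ]
  rw [e₁, trace_sub, Complex.sub_re] at h₁
  rw [e₂, trace_add, Complex.add_re] at h₂
  rw [mul_sub, trace_sub, Complex.sub_re]
  linarith

lemma Matrix.IsHermitian.exists_sign {A : Matrix n n ℂ} (hA : A.IsHermitian) :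
    ∃ C : Matrix n n ℂ, IsSelfAdjoint C ∧ C * C = 1 ∧ -1 ≤ C ∧ C ≤ 1 ∧ C * A = CFC.abs A := by
  set s : ℝ → ℝ := fun x => if 0 ≤ x then 1 else -1
  have hs : ∀ x, s x = 1 ∨ s x = -1 := fun x => by by_cases hx : 0 ≤ x <;> simp [s, hx]
  have hcont : ∀ f : ℝ → ℝ, ContinuousOn f (spectrum ℝ A) := fun f =>
    finite_real_spectrum.continuousOn f
  refine ⟨cfc s A, cfc_predicate s A, ?_, ?_, ?_, ?_⟩
  · rw [← cfc_mul s s A (hcont s) (hcont s), ← cfc_one ℝ A]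
    refine cfc_congr fun x _ => ?_
    rcases hs x with h | h <;> simp [h]
  · simpa using
      algebraMap_le_cfc s (-1) A (fun x _ => by rcases hs x with h | h <;> simp [h]) (hcont s)
  · exact cfc_le_one s A fun x _ => by rcases hs x with h | h <;> simp [h]
  · rw [CFC.abs_eq_cfc_norm A hA.isSelfAdjoint]
    nth_rw 2 [← cfc_id' ℝ A]
    rw [← cfc_mul s (fun x => x) A (hcont s) (hcont _)]
    refine cfc_congr fun x _ => ?_
    by_cases hx : 0 ≤ x <;> simp [s, hx, abs_of_nonneg, abs_of_neg, not_le.mp]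

lemma Matrix.trace_conjStarAlgAut (U : unitary (Matrix n n ℂ)) (X : Matrix n n ℂ) :
    (Unitary.conjStarAlgAut ℂ _ U X).trace = X.trace := by
  rw [Unitary.conjStarAlgAut_apply, trace_mul_cycle, Unitary.coe_star_mul_self, one_mul]

lemma Matrix.IsHermitian.exists_isStarProjection {A : Matrix n n ℂ} (hA : A.IsHermitian)
    (S : Finset n) : ∃ P : Matrix n n ℂ, IsStarProjection P ∧ P.trace.re = #S ∧
      (P * A).trace.re = ∑ i ∈ S, hA.eigenvalues i := by
  set φ := Unitary.conjStarAlgAut ℂ _ hA.eigenvectorUnitary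
  set D : Matrix n n ℂ := diagonal fun i => if i ∈ S then 1 else 0
  have hD : IsStarProjection D := by
    constructor
    · simp [IsIdempotentElem, D, diagonal_mul_diagonal]
    · simp [IsSelfAdjoint, D, star_eq_conjTranspose, diagonal_conjTranspose]
  refine ⟨φ D, hD.map φ, ?_, ?_⟩
  · rw [trace_conjStarAlgAut]
    simp [D]
  · conv_lhs => rw [hA.spectral_theorem, ← map_mul, trace_conjStarAlgAut]
    simp [D, diagonal_mul_diagonal, Finset.sum_ite_mem]

end

lemma traceNorm_eq_re_trace_abs {d : ℕ} (A : Matrix (Fin d) (Fin d) ℂ) :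
    traceNorm A = (CFC.abs A).trace.re := by
  have h : traceNorm A = ((posSemidef_conjTranspose_mul_self A).1.cfc Real.sqrt).trace.re := rfl
  rw [h, ← IsHermitian.cfc_eq, CFC.abs, star_eq_conjTranspose,
    CFC.sqrt_eq_real_sqrt _ (posSemidef_conjTranspose_mul_self A).nonneg, cfcₙ_eq_cfc]

section HilbertSchmidt
variable {n : Type*} [Fintype n] [DecidableEq n]

noncomputable local instance : SeminormedAddCommGroup (Matrix n n ℂ) :=
  toMatrixSeminormedAddCommGroup 1 PosSemidef.one

noncomputable local instance : InnerProductSpace ℂ (Matrix n n ℂ) :=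
  toMatrixInnerProductSpace 1 PosSemidef.one

namespace HilbertSchmidt

lemma inner_eq_trace (X Y : Matrix n n ℂ) : inner ℂ X Y = (Y * Xᴴ).trace := by
  simp only [inner, mul_one]

lemma norm_sq_eq_re_trace (X : Matrix n n ℂ) : ‖X‖ ^ 2 = (X * Xᴴ).trace.re := by
  rw [norm_sq_eq_re_inner (𝕜 := ℂ), inner_eq_trace]
  rfl

lemma norm_conjTranspose (X : Matrix n n ℂ) : ‖Xᴴ‖ = ‖X‖ := by
  rw [← sq_eq_sq₀ (norm_nonneg _) (norm_nonneg _), norm_sq_eq_re_trace, norm_sq_eq_re_trace,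
    conjTranspose_conjTranspose, trace_mul_comm]

lemma re_trace_mul_le (X Y : Matrix n n ℂ) : (X * Y).trace.re ≤ ‖X‖ * ‖Y‖ := by
  have := re_inner_le_norm (𝕜 := ℂ) Xᴴ Y
  rwa [inner_eq_trace, conjTranspose_conjTranspose, norm_conjTranspose, trace_mul_comm] at this

lemma norm_mul_le_of_isStarProjection {Q : Matrix n n ℂ} (hQ : IsStarProjection Q)
    (X : Matrix n n ℂ) : ‖Q * X‖ ≤ ‖X‖ := by
  have horth : inner ℂ (Q * X) ((1 - Q) * X) = 0 := by
    rw [inner_eq_trace, conjTranspose_mul, ← star_eq_conjTranspose Q, hQ.isSelfAdjoint.star_eq,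
      ← mul_assoc, trace_mul_comm _ Q]
    simp only [← mul_assoc, hQ.mul_one_sub_self, zero_mul, trace_zero]
  have := norm_add_sq_eq_norm_sq_add_norm_sq_of_inner_eq_zero _ _ horth
  rw [← add_mul, add_sub_cancel, one_mul] at this
  nlinarith [norm_nonneg (Q * X), norm_nonneg X, norm_nonneg ((1 - Q) * X)]

lemma norm_mul_eq_sqrt_re_trace {P C : Matrix n n ℂ} (hP : IsStarProjection P)
    (hC : IsSelfAdjoint C) (hCC : C * C = 1) : ‖P * C‖ = √(P.trace.re) := by
  have hPCCP : P * C * (P * C)ᴴ = P := by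
    rw [conjTranspose_mul, ← star_eq_conjTranspose, ← star_eq_conjTranspose, hC.star_eq,
      hP.isSelfAdjoint.star_eq, mul_assoc, ← mul_assoc C, hCC, one_mul, hP.isIdempotentElem.eq]
  rw [← Real.sqrt_sq (norm_nonneg (P * C)), norm_sq_eq_re_trace, hPCCP]

lemma re_trace_mul_le_add_compress {P C : Matrix n n ℂ} (hP : IsStarProjection P)
    (hC : IsSelfAdjoint C) (hCC : C * C = 1) (A : Matrix n n ℂ) :
    (C * A).trace.re ≤ 2 * √(P.trace.re) * ‖A‖ + ((1 - P) * C * (1 - P) * A).trace.re := by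
  have hsplit : C * A = P * C * A + (1 - P) * (P * C)ᴴ * A + (1 - P) * C * (1 - P) * A := by
    rw [conjTranspose_mul, ← star_eq_conjTranspose, ← star_eq_conjTranspose, hC.star_eq,
      hP.isSelfAdjoint.star_eq]
    noncomm_ring
  have hPC := norm_mul_eq_sqrt_re_trace hP hC hCC
  have h₁ := re_trace_mul_le (P * C) A
  have h₂ : ((1 - P) * (P * C)ᴴ * A).trace.re ≤ ‖P * C‖ * ‖A‖ :=
    (re_trace_mul_le _ A).trans <| mul_le_mul_of_nonneg_right
      ((norm_mul_le_of_isStarProjection hP.one_sub _).trans_eq (norm_conjTranspose _))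
      (norm_nonneg A)
  rw [hsplit, trace_add, trace_add, Complex.add_re, Complex.add_re]
  rw [hPC] at h₁ h₂
  linarith

end HilbertSchmidt

lemma DHS_eq_norm {d : ℕ} (ρ σ : Matrix (Fin d) (Fin d) ℂ) : DHS ρ σ = ‖ρ - σ‖ := by
  rw [DHS, trace_mul_comm, ← HilbertSchmidt.norm_sq_eq_re_trace, Real.sqrt_sq (norm_nonneg _)]

lemma DTr_le_of_isStarProjection {d : ℕ} {ρ σ P : Matrix (Fin d) (Fin d) ℂ} (hρ : ρ.PosSemidef)
    (hσ : σ.PosSemidef) (hP : IsStarProjection P) :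
    DTr ρ σ ≤ √(P.trace.re) * DHS ρ σ + (((1 - P) * ρ).trace.re + ((1 - P) * σ).trace.re) / 2 := by
  obtain ⟨C, hC, hCC, hC₁, hC₂, hCA⟩ := (hρ.1.sub hσ.1).exists_sign
  have h₁ := HilbertSchmidt.re_trace_mul_le_add_compress hP hC hCC (ρ - σ)
  have h₂ := re_trace_compress_sub_le hP.one_sub hC₁ hC₂ hρ hσ
  rw [hCA, ← traceNorm_eq_re_trace_abs] at h₁
  rw [DTr, DHS_eq_norm]
  linarith

lemma DHS_le_sum_mul {d : ℕ} {ι : Type*} [Fintype ι] {p : ι → ℝ} (hp : ∀ i, 0 ≤ p i)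
    (hps : ∑ i, p i = 1) (σ : Matrix (Fin d) (Fin d) ℂ) (ρ : ι → Matrix (Fin d) (Fin d) ℂ) :
    DHS σ (∑ i, (p i : ℂ) • ρ i) ≤ ∑ i, p i * DHS σ (ρ i) := by
  have hmix : σ - ∑ i, (p i : ℂ) • ρ i = ∑ i, (p i : ℂ) • (σ - ρ i) := by
    simp only [smul_sub, Finset.sum_sub_distrib, ← Finset.sum_smul, ← Complex.ofReal_sum, hps,
      Complex.ofReal_one, one_smul]
  simp only [DHS_eq_norm, hmix]
  refine (norm_sum_le _ _).trans_eq (Finset.sum_congr rfl fun i _ => ?_)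
  rw [norm_smul, Complex.norm_real, Real.norm_of_nonneg (hp i)]

end HilbertSchmidt

lemma sum_mul_le_sqrt_sum_mul_sq {ι : Type*} [Fintype ι] {w : ι → ℝ} (hw : ∀ i, 0 ≤ w i)
    (hw1 : ∑ i, w i = 1) (f : ι → ℝ) : ∑ i, w i * f i ≤ √(∑ i, w i * f i ^ 2) := by
  refine Real.le_sqrt_of_sq_le ?_
  simpa [hw1] using Finset.sum_sq_le_sum_mul_sum_of_sq_le_mul univ (fun i _ => hw i)
    (fun i _ => mul_nonneg (hw i) (sq_nonneg (f i)))
    (fun i _ => (by ring : _ = w i * (w i * f i ^ 2)).le)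

section Mixture
variable {d : ℕ} {ι : Type*} [Fintype ι] {p : ι → ℝ}

lemma sum_mul_DTr_le_of_isStarProjection (hp : ∀ i, 0 ≤ p i) (hps : ∑ i, p i = 1)
    {ρ : ι → Matrix (Fin d) (Fin d) ℂ} (hρ : ∀ i, (ρ i).PosSemidef)
    {P : Matrix (Fin d) (Fin d) ℂ} (hP : IsStarProjection P) :
    ∑ i, p i * DTr (ρ i) (∑ j, (p j : ℂ) • ρ j)
      ≤ √(P.trace.re) * ∑ i, p i * DHS (ρ i) (∑ j, (p j : ℂ) • ρ j)
        + ((1 - P) * ∑ j, (p j : ℂ) • ρ j).trace.re := by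
  set ρbar := ∑ j, (p j : ℂ) • ρ j
  have hρbar : ρbar.PosSemidef :=
    posSemidef_sum _ fun i _ => (hρ i).smul (Complex.zero_le_real.mpr (hp i))
  have hmix : ∑ i, p i * ((1 - P) * ρ i).trace.re = ((1 - P) * ρbar).trace.re := by
    simp [ρbar, Matrix.mul_sum, trace_sum, Complex.re_sum]
  have hterm : ∀ i, p i * DTr (ρ i) ρbar ≤ √(P.trace.re) * (p i * DHS (ρ i) ρbar)
      + p i * ((1 - P) * ρ i).trace.re / 2 + ((1 - P) * ρbar).trace.re / 2 * p i := fun i => by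
    linarith [mul_le_mul_of_nonneg_left (DTr_le_of_isStarProjection (hρ i) hρbar hP) (hp i)]
  refine (Finset.sum_le_sum fun i _ => hterm i).trans_eq ?_
  simp only [Finset.sum_add_distrib, ← Finset.mul_sum, ← Finset.sum_div, hmix, hps]
  ring

lemma sum_mul_DHS_le_sqrt (hp : ∀ i, 0 ≤ p i) (hps : ∑ i, p i = 1)
    (ρ : ι → Matrix (Fin d) (Fin d) ℂ) :
    ∑ i, p i * DHS (ρ i) (∑ j, (p j : ℂ) • ρ j)
      ≤ √(∑ i, ∑ j, p i * p j * DHS (ρ i) (ρ j) ^ 2) :=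
  calc ∑ i, p i * DHS (ρ i) (∑ j, (p j : ℂ) • ρ j)
      ≤ ∑ i, p i * ∑ j, p j * DHS (ρ i) (ρ j) := by
        gcongr with i; exacts [hp i, DHS_le_sum_mul hp hps (ρ i) ρ]
    _ = ∑ x : ι × ι, p x.1 * p x.2 * DHS (ρ x.1) (ρ x.2) := by
        simp [Fintype.sum_prod_type, Finset.mul_sum, mul_assoc]
    _ ≤ √(∑ x : ι × ι, p x.1 * p x.2 * DHS (ρ x.1) (ρ x.2) ^ 2) :=
        sum_mul_le_sqrt_sum_mul_sq (w := fun x : ι × ι => p x.1 * p x.2)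
          (fun x => mul_nonneg (hp x.1) (hp x.2))
          (by simp [Fintype.sum_prod_type, ← Finset.mul_sum, hps]) _
    _ = √(∑ i, ∑ j, p i * p j * DHS (ρ i) (ρ j) ^ 2) := by rw [Fintype.sum_prod_type]

end Mixture

lemma le_div_two_sub_sqrt_two_mul_sqrt_two {a : ℝ} (ha : 0 ≤ a) :
    a ≤ a / ((2 - √2) * √2) := by
  have h2 : √2 * √2 = 2 := Real.mul_self_sqrt zero_le_two
  refine le_div_self ha ?_ ?_ <;>
    nlinarith [Real.sqrt_nonneg 2, Real.sqrt_lt_sqrt zero_le_two (by norm_num : (2:ℝ) < 4)]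

theorem meanTraceDist_le_sqrt_meanSquaredHS_rank_general (d N k : ℕ) (η : ℝ)
    (ρ : Fin N → Matrix (Fin d) (Fin d) ℂ)
    (hρ : ∀ i, (ρ i).PosSemidef ∧ (ρ i).trace = 1)
    (p : Fin N → ℝ) (hp : ∀ i, 0 ≤ p i) (hps : ∑ i, p i = 1)
    (ρbar : Matrix (Fin d) (Fin d) ℂ) (hbar : ρbar = ∑ i, (p i : ℂ) • ρ i)
    (hherm : ρbar.IsHermitian)
    (heig : ∃ S : Finset (Fin d), S.card = k ∧ 1 - η ≤ ∑ i ∈ S, hherm.eigenvalues i) :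
    ∑ i, p i * DTr (ρ i) ρbar
      ≤ (Real.sqrt k / ((2 - Real.sqrt 2) * Real.sqrt 2)) *
        Real.sqrt (∑ i, ∑ j, p i * p j * (DHS (ρ i) (ρ j)) ^ 2) + η := by
  obtain ⟨S, rfl, hS⟩ := heig
  obtain ⟨P, hP, hPtr, hPρbar⟩ := hherm.exists_isStarProjection S
  subst hbar
  have htail : ((1 - P) * ∑ i, (p i : ℂ) • ρ i).trace.re ≤ η := by
    have htr : (∑ i, (p i : ℂ) • ρ i).trace = 1 := by
      simp [trace_sum, trace_smul, (hρ _).2, ← Complex.ofReal_sum, hps]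
    rw [sub_mul, one_mul, trace_sub, Complex.sub_re, htr, Complex.one_re]
    linarith
  refine (sum_mul_DTr_le_of_isStarProjection hp hps (fun i => (hρ i).1) hP).trans
    (add_le_add ?_ htail)
  rw [hPtr]
  exact mul_le_mul (le_div_two_sub_sqrt_two_mul_sqrt_two (Real.sqrt_nonneg _))
    (sum_mul_DHS_le_sqrt hp hps ρ)
    (sum_nonneg fun i _ => mul_nonneg (hp i) (Real.sqrt_nonneg _))
    ((Real.sqrt_nonneg _).trans (le_div_two_sub_sqrt_two_mul_sqrt_two (Real.sqrt_nonneg _)))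

/-- If the sum of the `k` largest eigenvalues of `ρ̄` is at least `1 − η`, then
with `c = 2 − √2`,
`Σᵢ pᵢ D_Tr(ρᵢ, ρ̄) ≤ (√k/(c√2)) · (Σᵢⱼ pᵢ pⱼ D_HS(ρᵢ,ρⱼ)²)^{1/2} + η`. -/
theorem meanTraceDist_le_sqrt_meanSquaredHS_rank (d N k : ℕ)
    (hk : 0 < k) (hkd : k ≤ d) (η : ℝ) (hη : 0 ≤ η)
    (ρ : Fin N → Matrix (Fin d) (Fin d) ℂ)
    (hρ : ∀ i, (ρ i).PosSemidef ∧ (ρ i).trace = 1)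
    (p : Fin N → ℝ) (hp : ∀ i, 0 ≤ p i) (hps : ∑ i, p i = 1)
    (ρbar : Matrix (Fin d) (Fin d) ℂ) (hbar : ρbar = ∑ i, (p i : ℂ) • ρ i)
    (hherm : ρbar.IsHermitian)
    (heig : ∃ S : Finset (Fin d), S.card = k ∧ 1 - η ≤ ∑ i ∈ S, hherm.eigenvalues i) :
    ∑ i, p i * DTr (ρ i) ρbar
      ≤ (Real.sqrt k / ((2 - Real.sqrt 2) * Real.sqrt 2)) *
        Real.sqrt (∑ i, ∑ j, p i * p j * (DHS (ρ i) (ρ j)) ^ 2) + η :=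
  meanTraceDist_le_sqrt_meanSquaredHS_rank_general d N k η ρ hρ p hp hps ρbar hbar hherm heig
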